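/- If S is a clique separator of a connected graph G (removal of the complete set S disconnects G) and H is a vertex set such that the induced subgraph G_H is connected and contains vertices in two distinct components of G − S, then G_H contains a clique separator of G_H, namely S ∩ H; in particular, an atom of G cannot meet two distinct components of G − S for any clique minimal separator S of G. -/

import Mathlib

open SimpleGraph

variable {V : Type*}

/-- `S` separates `u` from `v` in `G`: `u, v ∉ S` and every walk from `u` to `v` meets `S`. -/
def SepSet (G : SimpleGraph V) (u v : V) (S : Set V) : Prop :=
  u ∉ S ∧ v ∉ S ∧ ∀ p : G.Walk u v, ∃ x ∈ p.support, x ∈ S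

/-- `S` is a minimal `uv`-separator of `G`. -/
def MinSepSet (G : SimpleGraph V) (u v : V) (S : Set V) : Prop :=
  SepSet G u v S ∧ ∀ S' ⊂ S, ¬ SepSet G u v S'

/-- `S` is a clique minimal separator of `G`. -/
def CliqueMinSep (G : SimpleGraph V) (S : Set V) : Prop :=
  G.IsClique S ∧ ∃ u v, MinSepSet G u v S

/-- `S` is a clique separator of `G` (a complete set whose removal disconnects `G`). -/
def CliqueSep (G : SimpleGraph V) (S : Set V) : Prop :=
  G.IsClique S ∧ ∃ u v, SepSet G u v S

/-- The (open) neighborhood of a vertex set `A` in `G`. -/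
def Nbhd (G : SimpleGraph V) (A : Set V) : Set V :=
  {v | v ∉ A ∧ ∃ a ∈ A, G.Adj v a}

/-- `X` is a connected component of the induced subgraph of `G` on `A`:
a maximal subset of `A` inducing a connected subgraph. -/
def CompOf (G : SimpleGraph V) (A X : Set V) : Prop :=
  X.Nonempty ∧ X ⊆ A ∧ (G.induce X).Connected ∧
    ∀ Y, X ⊆ Y → Y ⊆ A → (G.induce Y).Connected → Y = X

/-- `A` is convex in `G`: no two distinct non-adjacent vertices of `A` are joined
by a path whose internal vertices all avoid `A`. -/
def ConvexSet (G : SimpleGraph V) (A : Set V) : Prop :=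
  ∀ u ∈ A, ∀ v ∈ A, u ≠ v → ¬ G.Adj u v →
    ∀ p : G.Walk u v, p.IsPath → ¬ (∀ x ∈ p.support, x ≠ u → x ≠ v → x ∉ A)

/-- `H` induces an atom of `G`: a maximal connected induced subgraph
containing no clique minimal separator. -/
def GraphAtom (G : SimpleGraph V) (H : Set V) : Prop :=
  (G.induce H).Connected ∧ (¬ ∃ S : Set H, CliqueMinSep (G.induce H) S) ∧
  ∀ H', H ⊆ H' → (G.induce H').Connected →
    (¬ ∃ S : Set H', CliqueMinSep (G.induce H') S) → H' = H

/-- `α` is a maximum cardinality search ordering of `G` (smaller labels are chosen later):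
when the vertex `u` receives its label, the already-labeled vertices are those with larger
labels, and `u` maximizes the number of labeled neighbors among all yet-unlabeled vertices. -/
def IsMCS {n : ℕ} (G : SimpleGraph V) (α : V ≃ Fin n) : Prop :=
  ∀ u w : V, α w ≤ α u →
    {x | G.Adj w x ∧ α u < α x}.ncard ≤ {x | G.Adj u x ∧ α u < α x}.ncard

/- Every walk of `G[H]` from `x` to `y` is a walk of `G`, so it meets `S`; hence the clique
`S ∩ H` separates `x` and `y` in `G[H]`. In a finite graph any clique separator shrinks to an
inclusion-minimal separator, which is still a clique, so `G[H]` has a clique minimal separator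
and cannot be an atom. -/

section

variable {G : SimpleGraph V}

theorem SepSet.induce {x y : V} {S H : Set V} (hsep : SepSet G x y S) (hx : x ∈ H) (hy : y ∈ H) :
    SepSet (G.induce H) ⟨x, hx⟩ ⟨y, hy⟩ (Subtype.val ⁻¹' S) := by
  refine ⟨hsep.1, hsep.2.1, fun p => ?_⟩
  obtain ⟨z, hz, hzS⟩ := hsep.2.2 (p.map (Embedding.induce H).toHom)
  obtain ⟨w, hw, rfl⟩ := List.mem_map.mp ((Walk.support_map _ p).subst (motive := (z ∈ ·)) hz)
  exact ⟨w, hw, hzS⟩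

theorem SimpleGraph.IsClique.preimage_val_induce {S : Set V} (hS : G.IsClique S) (H : Set V) :
    (G.induce H).IsClique (Subtype.val ⁻¹' S) :=
  isClique_induce_iff.mpr (hS.subset (Set.image_preimage_subset _ _))

theorem SimpleGraph.IsClique.cliqueSep_induce {S H : Set V} {x y : V} (hS : G.IsClique S)
    (hsep : SepSet G x y S) (hx : x ∈ H) (hy : y ∈ H) :
    CliqueSep (G.induce H) (Subtype.val ⁻¹' S) :=
  ⟨hS.preimage_val_induce H, _, _, hsep.induce hx hy⟩

theorem SepSet.exists_minSepSet_subset [Finite V] {u v : V} {S : Set V} (hS : SepSet G u v S) :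
    ∃ S' ⊆ S, MinSepSet G u v S' := by
  obtain ⟨S', hS'S, hmin⟩ := exists_minimal_le_of_wellFoundedLT (SepSet G u v) S hS
  exact ⟨S', hS'S, hmin.prop, fun _ hlt => hmin.not_prop_of_lt hlt⟩

theorem CliqueSep.exists_cliqueMinSep [Finite V] {S : Set V} (hS : CliqueSep G S) :
    ∃ S' ⊆ S, CliqueMinSep G S' := by
  obtain ⟨hclique, u, v, hsep⟩ := hS
  obtain ⟨S', hS'S, hmin⟩ := hsep.exists_minSepSet_subset
  exact ⟨S', hS'S, hclique.subset hS'S, u, v, hmin⟩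

end

theorem clique_sep_restricts_and_atom_avoids_general [Fintype V]
    (G : SimpleGraph V) :
    (∀ (S H : Set V) (x y : V), CliqueSep G S → (G.induce H).Connected →
      x ∈ H → y ∈ H → SepSet G x y S →
      CliqueSep (G.induce H) (Subtype.val ⁻¹' S)) ∧
    (∀ (H S : Set V) (x y : V), GraphAtom G H → CliqueMinSep G S →
      x ∈ H → y ∈ H → ¬ SepSet G x y S) := by
  refine ⟨fun S H x y hS _ hx hy hsep => hS.1.cliqueSep_induce hsep hx hy, ?_⟩
  intro H S x y hAtom hS hx hy hsep
  obtain ⟨S', -, hS'⟩ := (hS.1.cliqueSep_induce hsep hx hy).exists_cliqueMinSep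
  exact hAtom.2.1 ⟨S', hS'⟩

theorem clique_sep_restricts_and_atom_avoids [Fintype V]
    (G : SimpleGraph V) (hG : G.Connected) :
    (∀ (S H : Set V) (x y : V), CliqueSep G S → (G.induce H).Connected →
      x ∈ H → y ∈ H → SepSet G x y S →
      CliqueSep (G.induce H) (Subtype.val ⁻¹' S)) ∧
    (∀ (H S : Set V) (x y : V), GraphAtom G H → CliqueMinSep G S →
      x ∈ H → y ∈ H → ¬ SepSet G x y S) :=
  clique_sep_restricts_and_atom_avoids_general G
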